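/- A connected finite functional graph is determined, up to isomorphism, by any one of its unrolls together with its cycle length: let f : α → α and g : β → β be connected FGs on finite nonempty types having the same number of periodic points, let a be a periodic point of f and b a periodic point of g. If the digraphs of the unrolls U(f,a) and U(g,b) are isomorphic, then the FGs f and g are isomorphic. -/

import Mathlib

namespace DDS

/-- A homomorphism of digraphs `(γ, E) → (δ, E')` is a map preserving edges. -/
def IsHom {γ : Type*} {δ : Type*} (E : γ → γ → Prop) (E' : δ → δ → Prop) (τ : γ → δ) : Prop :=
  ∀ ⦃u v⦄, E u v → E' (τ u) (τ v)

/-- Two digraphs are isomorphic if there is an edge-preserving (in both directions) bijection. -/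
def Isomorphic {γ : Type*} {δ : Type*} (E : γ → γ → Prop) (E' : δ → δ → Prop) : Prop :=
  ∃ e : γ ≃ δ, ∀ u v, E u v ↔ E' (e u) (e v)

/-- The number of digraph homomorphisms from `(γ, E)` to `(δ, E')`. -/
noncomputable def homCount (γ : Type*) (δ : Type*) (E : γ → γ → Prop) (E' : δ → δ → Prop) : ℕ :=
  Nat.card {τ : γ → δ // IsHom E E' τ}

/-- An in-tree: a root and a parent map such that the root is a fixed point and every
vertex reaches the root by iterating the parent map. -/
structure InTree (V : Type*) where
  root : V
  parent : V → V
  parent_root : parent root = root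
  reaches_root : ∀ v, ∃ k, parent^[k] v = root

namespace InTree

variable {V : Type*}

/-- Edges of an in-tree are directed towards the root. -/
def Edge (T : InTree V) (v w : V) : Prop := v ≠ T.root ∧ w = T.parent v

/-- The height of a vertex: the least `k` with `parent^[k] v = root`. -/
noncomputable def height (T : InTree V) (v : V) : ℕ := sInf {k | T.parent^[k] v = T.root}

lemma height_spec (T : InTree V) (v : V) : T.parent^[T.height v] v = T.root :=
  Nat.sInf_mem (T.reaches_root v)

@[simp] lemma height_root (T : InTree V) : T.height T.root = 0 :=
  Nat.sInf_eq_zero.mpr (Or.inl (by simp))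

lemma height_eq_zero_iff (T : InTree V) {v : V} : T.height v = 0 ↔ v = T.root := by
  constructor
  · intro h
    have hs := T.height_spec v
    rw [h] at hs
    simpa using hs
  · rintro rfl
    exact T.height_root

lemma height_parent (T : InTree V) {v : V} (hv : v ≠ T.root) :
    T.height v = T.height (T.parent v) + 1 := by
  have h1 : T.height v ≠ 0 := fun h => hv (T.height_eq_zero_iff.mp h)
  obtain ⟨m, hm⟩ := Nat.exists_eq_succ_of_ne_zero h1
  have hsp : T.parent^[T.height v] v = T.root := T.height_spec v
  rw [hm, Function.iterate_succ_apply] at hsp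
  have hle : T.height (T.parent v) ≤ m := Nat.sInf_le hsp
  have hge : T.height v ≤ T.height (T.parent v) + 1 := by
    apply Nat.sInf_le
    show T.parent^[T.height (T.parent v) + 1] v = T.root
    rw [Function.iterate_succ_apply]
    exact T.height_spec (T.parent v)
  omega

lemma height_parent_le (T : InTree V) (v : V) : T.height (T.parent v) ≤ T.height v := by
  by_cases hv : v = T.root
  · subst hv; rw [T.parent_root]
  · rw [T.height_parent hv]; omega

/-- The height of a finite in-tree: the maximum height of a vertex. -/
noncomputable def treeHeight [Fintype V] (T : InTree V) : ℕ := Finset.univ.sup T.height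

section Star

variable {V₁ V₂ : Type*} (T₁ : InTree V₁) (T₂ : InTree V₂)

/-- Vertices of the `⋆` product: pairs of vertices of equal height. -/
def StarVertex := {x : V₁ × V₂ // T₁.height x.1 = T₂.height x.2}

lemma star_parent_mem (x : V₁ × V₂) (hx : T₁.height x.1 = T₂.height x.2) :
    T₁.height (T₁.parent x.1) = T₂.height (T₂.parent x.2) := by
  by_cases h : x.1 = T₁.root
  · have h2 : x.2 = T₂.root := by
      apply T₂.height_eq_zero_iff.mp
      rw [← hx, h, T₁.height_root]
    rw [h, h2, T₁.parent_root, T₂.parent_root, T₁.height_root, T₂.height_root]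
  · have h2 : x.2 ≠ T₂.root := by
      intro hc
      apply h
      apply T₁.height_eq_zero_iff.mp
      rw [hx, hc, T₂.height_root]
    have e1 := T₁.height_parent h
    have e2 := T₂.height_parent h2
    omega

/-- The parent map of the `⋆` product. -/
def starParent (x : StarVertex T₁ T₂) : StarVertex T₁ T₂ :=
  ⟨(T₁.parent x.1.1, T₂.parent x.1.2), star_parent_mem T₁ T₂ x.1 x.2⟩

lemma starParent_iterate (k : ℕ) (x : StarVertex T₁ T₂) :
    ((starParent T₁ T₂)^[k] x).1 = (T₁.parent^[k] x.1.1, T₂.parent^[k] x.1.2) := by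
  induction k generalizing x with
  | zero => simp
  | succ k ih =>
      rw [Function.iterate_succ_apply, Function.iterate_succ_apply,
        Function.iterate_succ_apply, ih]
      rfl

/-- The `⋆` product of two in-trees. -/
def star : InTree (StarVertex T₁ T₂) where
  root := ⟨(T₁.root, T₂.root), by simp⟩
  parent := starParent T₁ T₂
  parent_root := by
    apply Subtype.ext
    show (T₁.parent T₁.root, T₂.parent T₂.root) = (T₁.root, T₂.root)
    rw [T₁.parent_root, T₂.parent_root]
  reaches_root := by
    intro x
    refine ⟨T₁.height x.1.1, Subtype.ext ?_⟩
    rw [starParent_iterate]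
    have h1 : T₁.parent^[T₁.height x.1.1] x.1.1 = T₁.root := T₁.height_spec _
    have h2 : T₂.parent^[T₁.height x.1.1] x.1.2 = T₂.root := by
      rw [x.2]; exact T₂.height_spec _
    show (_, _) = (T₁.root, T₂.root)
    rw [h1, h2]

end Star

section Cut

variable (T : InTree V) (t : ℕ)

/-- Vertices of the cut at level `t`: vertices of height at most `t`. -/
def CutVertex := {v : V // T.height v ≤ t}

/-- The parent map of the cut. -/
def cutParent (x : CutVertex T t) : CutVertex T t :=
  ⟨T.parent x.1, le_trans (T.height_parent_le x.1) x.2⟩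

lemma cutParent_iterate (k : ℕ) (x : CutVertex T t) :
    ((cutParent T t)^[k] x).1 = T.parent^[k] x.1 := by
  induction k generalizing x with
  | zero => simp
  | succ k ih =>
      rw [Function.iterate_succ_apply, Function.iterate_succ_apply, ih]
      rfl

/-- The cut of an in-tree at level `t`: the sub-in-tree induced on vertices of height `≤ t`. -/
def cut : InTree (CutVertex T t) where
  root := ⟨T.root, by simp⟩
  parent := cutParent T t
  parent_root := Subtype.ext T.parent_root
  reaches_root := fun x =>
    ⟨T.height x.1, Subtype.ext (by rw [cutParent_iterate]; exact T.height_spec x.1)⟩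

end Cut

end InTree

section Unroll

variable {α : Type*} (f : α → α) (v : α)

/-- Vertices of the unroll of the functional graph of `f` from `v`. -/
def UnrollVertex := {ui : α × ℕ // f^[ui.2] ui.1 = v}

/-- The parent map of the unroll: `(u, i+1) ↦ (f u, i)`, fixing the root `(v, 0)`. -/
def unrollParent : UnrollVertex f v → UnrollVertex f v
  | ⟨(u, 0), h⟩ => ⟨(u, 0), h⟩
  | ⟨(u, i+1), h⟩ => ⟨(f u, i), by rw [← Function.iterate_succ_apply]; exact h⟩

lemma unrollParent_iterate :
    ∀ (i : ℕ) (u : α) (h : f^[i] u = v),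
      (unrollParent f v)^[i] ⟨(u, i), h⟩ = ⟨(v, 0), rfl⟩ := by
  intro i
  induction i with
  | zero =>
      intro u h
      have hu : u = v := by simpa using h
      subst hu
      rfl
  | succ i ih =>
      intro u h
      show (unrollParent f v)^[i] ⟨(f u, i), _⟩ = _
      exact ih (f u) _

/-- The unroll of the functional graph of `f : α → α` from the point `v`. -/
def unroll : InTree (UnrollVertex f v) where
  root := ⟨(v, 0), rfl⟩
  parent := unrollParent f v
  parent_root := rfl
  reaches_root := fun x => ⟨x.1.2, by
    obtain ⟨⟨u, i⟩, h⟩ := x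
    exact unrollParent_iterate f v i u h⟩

end Unroll

section FG

/-- The number of periodic points of `f`. -/
noncomputable def periodicCount {α : Type*} (f : α → α) : ℕ :=
  Nat.card {x : α // ∃ n, 1 ≤ n ∧ f^[n] x = x}

/-- A functional graph is connected if the equivalence relation generated by
`x ∼ f x` relates all pairs of points. -/
def FGConnected {α : Type*} (f : α → α) : Prop :=
  ∀ x y : α, Relation.EqvGen (fun u w => f u = w) x y

/-- Isomorphism of functional graphs. -/
def FGIso {α β : Type*} (f : α → α) (g : β → β) : Prop :=
  ∃ e : α ≃ β, ∀ x, e (f x) = g (e x)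

/-- The product of two functional graphs. -/
def prodMap {α γ : Type*} (f : α → α) (h : γ → γ) : α × γ → α × γ :=
  fun z => (f z.1, h z.2)

/-- `FGContains f h g` means the functional graph of `g` is (isomorphic to) a union of
connected components of the product `f × h`. -/
def FGContains {α γ β : Type*} (f : α → α) (h : γ → γ) (g : β → β) : Prop :=
  ∃ e : β → α × γ, Function.Injective e ∧ e ∘ g = prodMap f h ∘ e ∧
    ∀ z, prodMap f h z ∈ Set.range e → z ∈ Set.range e

end FG

end DDS

/-!
An isomorphism of unrolls commutes with the parent maps, so it preserves heights (the second
coordinates) and the vertices having descendants at every depth, which in `U(f, a)` are the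
`(u, i)` with `u` periodic. In a connected FG all periodic points lie on the cycle through `a`,
of length `p`; hence `i` is the first time `u` reaches `a` iff every such ancestor of `(u, i)`
has height `< p`, a property the isomorphism preserves. The first-hit vertices are in bijection
with the points, and the induced bijection `α ≃ β` commutes with `f` and `g`: the first-hit
vertex of `f u` is the parent `(f u, i)` of the first-hit vertex `(u, i + 1)`, while that of `f a`
is `(f a, p - 1)`, the deep vertex of height `p - 1`, whose image must be `(g b, p - 1)`.
-/

open Function

namespace DDS

section PeriodicPoints

variable {α : Type*} {f : α → α} {a x : α}

lemma exists_iterate_mem_periodicPts [Finite α] (f : α → α) :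
    ∃ N, ∀ z, f^[N] z ∈ periodicPts f := by
  have h : ∀ z, ∃ s, f^[s] z ∈ periodicPts f := fun z => by
    obtain ⟨s, t, hst, h⟩ := Finite.exists_ne_map_eq_of_infinite (fun n => f^[n] z)
    wlog hlt : s < t generalizing s t
    · exact this t s hst.symm h.symm (by omega)
    refine ⟨s, t - s, by omega, ?_⟩
    rw [IsPeriodicPt, IsFixedPt, ← iterate_add_apply, Nat.sub_add_cancel hlt.le]
    exact h.symm
  choose s hs using h
  obtain ⟨N, hN⟩ := Finite.bddAbove_range s
  refine ⟨N, fun z => ?_⟩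
  rw [← Nat.sub_add_cancel (hN ⟨z, rfl⟩), iterate_add_apply]
  exact (bijOn_periodicPts f).mapsTo.iterate _ (hs z)

lemma exists_iterate_iterate_eq_self (hx : x ∈ periodicPts f) (l : ℕ) :
    ∃ m, f^[m] (f^[l] x) = x := by
  refine ⟨(minimalPeriod f x - 1) * l, ?_⟩
  rw [← iterate_add_apply, ← Nat.succ_mul, Nat.succ_eq_add_one,
    Nat.sub_add_cancel (minimalPeriod_pos_of_mem_periodicPts hx)]
  exact (isPeriodicPt_minimalPeriod f x).mul_const l

lemma iterate_minimalPeriod_of_iterate_eq (hx : x ∈ periodicPts f) {j : ℕ} (h : f^[j] x = a) :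
    f^[minimalPeriod f a] x = x := by
  rw [← h, minimalPeriod_apply_iterate hx, iterate_minimalPeriod]

lemma forall_iterate_ne_iff_forall_periodic_sub_lt (ha : a ∈ periodicPts f) {i : ℕ}
    (hi : f^[i] x = a) :
    (∀ j < i, f^[j] x ≠ a) ↔
      ∀ k ≤ i, f^[k] x ∈ periodicPts f → i - k < minimalPeriod f a := by
  have hp := minimalPeriod_pos_of_mem_periodicPts ha
  constructor
  · intro hfirst k hk hper
    by_contra! hle
    have hcyc : f^[minimalPeriod f a] (f^[k] x) = f^[k] x :=
      iterate_minimalPeriod_of_iterate_eq hper (j := i - k)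
        (by rw [← iterate_add_apply, Nat.sub_add_cancel hk, hi])
    refine hfirst (i - minimalPeriod f a) (by omega) ?_
    calc f^[i - minimalPeriod f a] x
        = f^[i - k - minimalPeriod f a] (f^[minimalPeriod f a] (f^[k] x)) := by
          rw [hcyc, ← iterate_add_apply]; congr 1; omega
      _ = f^[i] x := by rw [← iterate_add_apply, ← iterate_add_apply]; congr 1; omega
      _ = a := hi
  · intro hlow j hj hja
    refine not_isPeriodicPt_of_pos_of_lt_minimalPeriod (n := i - j) (by omega)
      (hlow j hj.le (hja ▸ ha)) ?_
    rw [IsPeriodicPt, IsFixedPt]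
    nth_rw 1 [← hja]
    rw [← iterate_add_apply, Nat.sub_add_cancel hj.le, hi]

end PeriodicPoints

namespace FGConnected

variable {α : Type*} {f : α → α} {a : α}

lemma exists_iterate_eq_iterate (hf : FGConnected f) (x y : α) : ∃ k l, f^[k] x = f^[l] y := by
  induction hf x y with
  | rel u w h => exact ⟨1, 0, h⟩
  | refl u => exact ⟨0, 0, rfl⟩
  | symm u w _ ih =>
    obtain ⟨k, l, h⟩ := ih
    exact ⟨l, k, h.symm⟩
  | trans u w z _ _ ih₁ ih₂ =>
    obtain ⟨k, l, h₁⟩ := ih₁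
    obtain ⟨k', l', h₂⟩ := ih₂
    refine ⟨k' + k, l + l', ?_⟩
    rw [iterate_add_apply, h₁, ← iterate_add_apply, Nat.add_comm k' l, iterate_add_apply, h₂,
      ← iterate_add_apply]

lemma exists_iterate_eq (hf : FGConnected f) (ha : a ∈ periodicPts f) (x : α) :
    ∃ n, f^[n] x = a := by
  obtain ⟨k, l, h⟩ := hf.exists_iterate_eq_iterate x a
  obtain ⟨m, hm⟩ := exists_iterate_iterate_eq_self ha l
  exact ⟨m + k, by rw [iterate_add_apply, h, hm]⟩

lemma periodicCount_eq (hf : FGConnected f) (ha : a ∈ periodicPts f) :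
    periodicCount f = minimalPeriod f a := by
  have hbij : Bijective fun j : Fin (minimalPeriod f a) =>
      (⟨f^[j] a, (bijOn_periodicPts f).mapsTo.iterate _ ha⟩ : periodicPts f) := by
    refine ⟨fun i j h => Fin.ext <|
      iterate_injOn_Iio_minimalPeriod i.2 j.2 (congrArg Subtype.val h), fun ⟨y, hy⟩ => ?_⟩
    obtain ⟨j, hj⟩ := hf.exists_iterate_eq ha y
    obtain ⟨n, hn⟩ := exists_iterate_iterate_eq_self hy j
    rw [hj] at hn
    exact ⟨⟨n % minimalPeriod f a, Nat.mod_lt _ (minimalPeriod_pos_of_mem_periodicPts ha)⟩,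
      Subtype.ext (by simp [iterate_mod_minimalPeriod_eq, hn])⟩
  exact (Nat.card_eq_of_bijective _ hbij).symm.trans (Nat.card_fin _)

end FGConnected

namespace InTree

variable {V W : Type*}

def IsDeep (T : InTree V) (v : V) : Prop := ∀ n, ∃ w, T.parent^[n] w = v

def DeepAncestorsBelow (T : InTree V) (p : ℕ) (v : V) : Prop :=
  ∀ k, T.IsDeep (T.parent^[k] v) → T.height (T.parent^[k] v) < p

lemma eq_root_of_parent_eq (T : InTree V) {v : V} (h : T.parent v = v) : v = T.root := by
  obtain ⟨k, hk⟩ := T.reaches_root v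
  rwa [iterate_fixed h] at hk

variable {T₁ : InTree V} {T₂ : InTree W} {e : V ≃ W}

lemma semiconj_parent_of_edge_iff (he : ∀ u v, T₁.Edge u v ↔ T₂.Edge (e u) (e v)) :
    Semiconj e T₁.parent T₂.parent := by
  intro v
  by_cases hv : v = T₁.root
  · -- otherwise `e root` has an out-edge, and pulling it back gives an out-edge of the root
    have hroot : e T₁.root = T₂.root := by
      by_contra h
      exact ((he _ (e.symm (T₂.parent (e T₁.root)))).mpr ⟨h, by simp⟩).1 rfl
    rw [hv, T₁.parent_root, hroot, T₂.parent_root]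
  · exact ((he v _).mp ⟨hv, rfl⟩).2

lemma map_root (hpar : Semiconj e T₁.parent T₂.parent) : e T₁.root = T₂.root :=
  T₂.eq_root_of_parent_eq (by rw [← hpar, T₁.parent_root])

lemma height_map (hpar : Semiconj e T₁.parent T₂.parent) (v : V) :
    T₂.height (e v) = T₁.height v := by
  simp only [height, ← hpar.iterate_right _ v, ← map_root hpar, e.apply_eq_iff_eq]

lemma isDeep_map_iff (hpar : Semiconj e T₁.parent T₂.parent) (v : V) :
    T₂.IsDeep (e v) ↔ T₁.IsDeep v :=
  forall_congr' fun n => by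
    rw [e.surjective.exists]
    exact exists_congr fun w => by rw [← hpar.iterate_right n w, e.apply_eq_iff_eq]

lemma deepAncestorsBelow_map_iff (hpar : Semiconj e T₁.parent T₂.parent) (p : ℕ) (v : V) :
    T₂.DeepAncestorsBelow p (e v) ↔ T₁.DeepAncestorsBelow p v :=
  forall_congr' fun k => by
    rw [← hpar.iterate_right k v, isDeep_map_iff hpar, height_map hpar]

end InTree

section Unroll

variable {α : Type*} {f : α → α} {a : α}

lemma UnrollVertex.ext {v w : UnrollVertex f a} (h : v.1 = w.1) : v = w :=
  Subtype.ext h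

lemma unroll_parent_val (v : UnrollVertex f a) (hv : v.1.2 ≠ 0) :
    ((unroll f a).parent v).1 = (f v.1.1, v.1.2 - 1) := by
  obtain ⟨⟨u, _ | i⟩, h⟩ := v
  · exact absurd rfl hv
  · rfl

lemma unroll_parent_iterate_val (v : UnrollVertex f a) {k : ℕ} (hk : k ≤ v.1.2) :
    ((unroll f a).parent^[k] v).1 = (f^[k] v.1.1, v.1.2 - k) := by
  induction k with
  | zero => rfl
  | succ k ih =>
    rw [iterate_succ_apply', unroll_parent_val _ (by rw [ih (by omega)]; omega), ih (by omega),
      iterate_succ_apply', Nat.sub_sub]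

lemma unroll_parent_iterate_of_le (v : UnrollVertex f a) {k : ℕ} (hk : v.1.2 ≤ k) :
    (unroll f a).parent^[k] v = (unroll f a).root := by
  have hroot : (unroll f a).parent^[v.1.2] v = (unroll f a).root :=
    unrollParent_iterate f a _ _ v.2
  rw [← Nat.sub_add_cancel hk, iterate_add_apply, hroot]
  exact iterate_fixed (unroll f a).parent_root _

lemma unroll_height (v : UnrollVertex f a) : (unroll f a).height v = v.1.2 := by
  refine le_antisymm (Nat.sInf_le (unroll_parent_iterate_of_le v le_rfl))
    (le_csInf ⟨_, unroll_parent_iterate_of_le v le_rfl⟩ fun k hk => ?_)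
  by_contra! hlt
  have hroot : (unroll f a).parent^[k] v = (unroll f a).root := hk
  have h := congrArg Prod.snd (unroll_parent_iterate_val v hlt.le)
  rw [hroot] at h
  change 0 = v.1.2 - k at h
  omega

lemma unroll_isDeep_iff [Finite α] (ha : a ∈ periodicPts f) (v : UnrollVertex f a) :
    (unroll f a).IsDeep v ↔ v.1.1 ∈ periodicPts f := by
  constructor
  · intro hv
    obtain ⟨N, hN⟩ := exists_iterate_mem_periodicPts f
    obtain ⟨w, hw⟩ := hv N
    by_cases hNw : N ≤ w.1.2
    · rw [← hw, unroll_parent_iterate_val w hNw]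
      exact hN _
    · rw [← hw, unroll_parent_iterate_of_le w (by omega)]
      exact ha
  · intro hu n
    obtain ⟨z, -, hz⟩ := ((bijOn_periodicPts f).surjOn.iterate n) hu
    let w : UnrollVertex f a := ⟨(z, v.1.2 + n), by
      show f^[v.1.2 + n] z = a
      rw [iterate_add_apply, hz]
      exact v.2⟩
    exact ⟨w, UnrollVertex.ext <| (unroll_parent_iterate_val w (Nat.le_add_left n v.1.2)).trans
      (Prod.ext hz (Nat.add_sub_cancel _ _))⟩

lemma unroll_deepAncestorsBelow_iff [Finite α] (ha : a ∈ periodicPts f) (v : UnrollVertex f a) :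
    (unroll f a).DeepAncestorsBelow (minimalPeriod f a) v ↔
      ∀ k ≤ v.1.2, f^[k] v.1.1 ∈ periodicPts f → v.1.2 - k < minimalPeriod f a := by
  refine forall_congr' fun k => ?_
  by_cases hk : k ≤ v.1.2
  · rw [unroll_isDeep_iff ha, unroll_height, unroll_parent_iterate_val v hk]
    simp only [hk, forall_true_left]
  · rw [unroll_parent_iterate_of_le v (by omega), (unroll f a).height_root]
    simp only [hk, false_implies, minimalPeriod_pos_of_mem_periodicPts ha, imp_true_iff]

end Unroll

section FirstHit

variable {α β : Type*} {f : α → α} {g : β → β} {a : α} {b : β}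

def UnrollVertex.IsFirstHit (v : UnrollVertex f a) : Prop := ∀ j < v.1.2, f^[j] v.1.1 ≠ a

lemma UnrollVertex.IsFirstHit.eq {v w : UnrollVertex f a} (hv : v.IsFirstHit)
    (hw : w.IsFirstHit) (h : v.1.1 = w.1.1) : v = w := by
  refine UnrollVertex.ext (Prod.ext h (le_antisymm (not_lt.1 fun hlt => hv _ hlt ?_)
    (not_lt.1 fun hlt => hw _ hlt ?_)))
  · rw [h]; exact w.2
  · rw [← h]; exact v.2

lemma UnrollVertex.IsFirstHit.parent {v : UnrollVertex f a} (hv : v.IsFirstHit) :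
    ((unroll f a).parent v).IsFirstHit := by
  obtain ⟨⟨u, _ | i⟩, h⟩ := v
  · exact hv
  · show ∀ j < i, f^[j] (f u) ≠ a
    intro j hj
    rw [← iterate_succ_apply]
    exact hv (j + 1) (Nat.succ_lt_succ hj)

lemma isFirstHit_iff_deepAncestorsBelow [Finite α] (ha : a ∈ periodicPts f)
    (v : UnrollVertex f a) :
    v.IsFirstHit ↔ (unroll f a).DeepAncestorsBelow (minimalPeriod f a) v := by
  rw [unroll_deepAncestorsBelow_iff ha]
  exact forall_iterate_ne_iff_forall_periodic_sub_lt ha v.2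

lemma isFirstHit_map_iff [Finite α] [Finite β] (ha : a ∈ periodicPts f)
    (hb : b ∈ periodicPts g) (hp : minimalPeriod f a = minimalPeriod g b)
    {e : UnrollVertex f a ≃ UnrollVertex g b}
    (hpar : Semiconj e (unroll f a).parent (unroll g b).parent) (v : UnrollVertex f a) :
    (e v).IsFirstHit ↔ v.IsFirstHit := by
  rw [isFirstHit_iff_deepAncestorsBelow hb, isFirstHit_iff_deepAncestorsBelow ha, ← hp,
    InTree.deepAncestorsBelow_map_iff hpar]

noncomputable def firstHitEquiv (hf : FGConnected f) (ha : a ∈ periodicPts f) :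
    {v : UnrollVertex f a // v.IsFirstHit} ≃ α :=
  Equiv.ofBijective (fun v => v.1.1.1) ⟨fun v w h => Subtype.ext (v.2.eq w.2 h), fun x => by
    classical
    have hx := hf.exists_iterate_eq ha x
    exact ⟨⟨⟨(x, Nat.find hx), Nat.find_spec hx⟩, fun _ => Nat.find_min hx⟩, rfl⟩⟩

variable (hf : FGConnected f) (ha : a ∈ periodicPts f)

lemma firstHitEquiv_symm_apply_apply {x : α}
    (hx : ((firstHitEquiv hf ha).symm x).1.1.2 ≠ 0) :
    ((firstHitEquiv hf ha).symm (f x)).1 =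
      (unroll f a).parent ((firstHitEquiv hf ha).symm x).1 := by
  set v := (firstHitEquiv hf ha).symm x
  suffices h : (firstHitEquiv hf ha).symm (f x) = ⟨_, v.2.parent⟩ by rw [h]
  rw [Equiv.symm_apply_eq]
  change f x = ((unroll f a).parent v.1).1.1
  rw [unroll_parent_val _ hx]
  exact congrArg f ((firstHitEquiv hf ha).apply_symm_apply x).symm

lemma firstHitEquiv_symm_apply_self :
    ((firstHitEquiv hf ha).symm (f a)).1.1 = (f a, minimalPeriod f a - 1) := by
  let w : UnrollVertex f a := ⟨(f a, minimalPeriod f a - 1), by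
    show f^[minimalPeriod f a - 1] (f a) = a
    rw [← iterate_succ_apply, Nat.succ_eq_add_one,
      Nat.sub_add_cancel (minimalPeriod_pos_of_mem_periodicPts ha), iterate_minimalPeriod]⟩
  have hw : w.IsFirstHit := fun j hj h => not_isPeriodicPt_of_pos_of_lt_minimalPeriod
    (f := f) (x := a) (n := j + 1) (by omega) (by change j < minimalPeriod f a - 1 at hj; omega)
    (by rw [IsPeriodicPt, IsFixedPt, iterate_succ_apply]; exact h)
  rw [(Equiv.symm_apply_eq _).2 (show f a = (firstHitEquiv hf ha) ⟨w, hw⟩ from rfl)]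

end FirstHit

section UnrollIso

variable {α β : Type*} {f : α → α} {g : β → β} {a : α} {b : β}
  {e : UnrollVertex f a ≃ UnrollVertex g b}

lemma unroll_level_map (hpar : Semiconj e (unroll f a).parent (unroll g b).parent)
    (v : UnrollVertex f a) : (e v).1.2 = v.1.2 := by
  rw [← unroll_height, InTree.height_map hpar, unroll_height]

variable [Finite α] [Finite β]

lemma map_firstHitEquiv_symm_apply_self (hf : FGConnected f) (ha : a ∈ periodicPts f)
    (hb : b ∈ periodicPts g) (hp : minimalPeriod f a = minimalPeriod g b)
    (hpar : Semiconj e (unroll f a).parent (unroll g b).parent) :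
    (e ((firstHitEquiv hf ha).symm (f a)).1).1.1 = g b := by
  set w := ((firstHitEquiv hf ha).symm (f a)).1
  have hw := firstHitEquiv_symm_apply_self hf ha
  have hlev : (e w).1.2 = minimalPeriod g b - 1 := by
    rw [unroll_level_map hpar, hw, hp]
  have hdeep : (e w).1.1 ∈ periodicPts g := by
    rw [← unroll_isDeep_iff hb, InTree.isDeep_map_iff hpar, unroll_isDeep_iff ha, hw]
    exact (bijOn_periodicPts f).mapsTo ha
  have hy : g^[minimalPeriod g b - 1] (e w).1.1 = b := hlev ▸ (e w).2
  calc (e w).1.1 = g^[minimalPeriod g b] (e w).1.1 :=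
        (iterate_minimalPeriod_of_iterate_eq hdeep (e w).2).symm
    _ = g^[(minimalPeriod g b - 1) + 1] (e w).1.1 := by
        rw [Nat.sub_add_cancel (minimalPeriod_pos_of_mem_periodicPts hb)]
    _ = g b := by rw [iterate_succ_apply', hy]

lemma map_firstHitEquiv_symm_apply_apply (hf : FGConnected f) (ha : a ∈ periodicPts f)
    (hb : b ∈ periodicPts g) (hp : minimalPeriod f a = minimalPeriod g b)
    (hpar : Semiconj e (unroll f a).parent (unroll g b).parent) (x : α) :
    (e ((firstHitEquiv hf ha).symm (f x)).1).1.1 =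
      g (e ((firstHitEquiv hf ha).symm x).1).1.1 := by
  set v := ((firstHitEquiv hf ha).symm x).1
  have hvx : v.1.1 = x := (firstHitEquiv hf ha).apply_symm_apply x
  by_cases hv : v.1.2 = 0
  · have hroot : v = (unroll f a).root := by
      refine UnrollVertex.ext (Prod.ext ?_ hv)
      change v.1.1 = a
      simpa [hv] using v.2
    have hxa : x = a := by rw [← hvx, hroot]; rfl
    rw [hroot, InTree.map_root hpar, hxa]
    exact map_firstHitEquiv_symm_apply_self hf ha hb hp hpar
  · rw [firstHitEquiv_symm_apply_apply hf ha hv, hpar, unroll_parent_val]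
    rwa [unroll_level_map hpar]

end UnrollIso

end DDS

open DDS DDS.InTree

theorem roll_unroll_iso_general {α β : Type*} [Fintype α] [Fintype β]
    (f : α → α) (g : β → β) (hf : FGConnected f) (hg : FGConnected g)
    (hcard : periodicCount f = periodicCount g)
    (a : α) (b : β)
    (ha : ∃ n, 1 ≤ n ∧ f^[n] a = a) (hb : ∃ n, 1 ≤ n ∧ g^[n] b = b)
    (hiso : Isomorphic (unroll f a).Edge (unroll g b).Edge) :
    FGIso f g := by
  obtain ⟨e, he⟩ := hiso
  have hpar := InTree.semiconj_parent_of_edge_iff he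
  have hp : minimalPeriod f a = minimalPeriod g b := by
    rw [← hf.periodicCount_eq ha, ← hg.periodicCount_eq hb, hcard]
  refine ⟨(firstHitEquiv hf ha).symm.trans ((e.subtypeEquiv fun v =>
    (isFirstHit_map_iff ha hb hp hpar v).symm).trans (firstHitEquiv hg hb)), fun x => ?_⟩
  exact map_firstHitEquiv_symm_apply_apply hf ha hb hp hpar x

/-- A connected finite functional graph is determined, up to isomorphism, by any one of its
unrolls together with its cycle length (= number of periodic points). -/
theorem roll_unroll_iso {α β : Type*} [Fintype α] [Fintype β] [Nonempty α] [Nonempty β]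
    (f : α → α) (g : β → β) (hf : FGConnected f) (hg : FGConnected g)
    (hcard : periodicCount f = periodicCount g)
    (a : α) (b : β)
    (ha : ∃ n, 1 ≤ n ∧ f^[n] a = a) (hb : ∃ n, 1 ≤ n ∧ g^[n] b = b)
    (hiso : Isomorphic (unroll f a).Edge (unroll g b).Edge) :
    FGIso f g :=
  roll_unroll_iso_general f g hf hg hcard a b ha hb hiso
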